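/- arXiv:1802.09773 — 11 statements merged into one kernel-verified Lean document; each statement's English description precedes it below -/
import Mathlib

section
/- Let (X,d) be a metric space and T : X → X a generalized C^q-mapping, i.e., there exists h ∈ [0,1) such that d(Tx,Ty) ≤ h·max{d(x,y), d(x,Tx)+d(y,Ty), d(x,Ty)+d(y,Tx)} for all x,y ∈ X. Then, setting λ = max{h, h/(1−h)}, for all x,y ∈ X one has d(Tx,Ty) ≤ λ·d(x,y) + 2λ·d(x,Tx). -/
/-- A generalized C^q-mapping satisfies d(Tx,Ty) ≤ λ d(x,y) + 2λ d(x,Tx). -/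
theorem stmt_0 {X : Type*} [MetricSpace X] (T : X → X) (h : ℝ)
    (hh0 : 0 ≤ h) (hh1 : h < 1)
    (hT : ∀ x y : X, dist (T x) (T y) ≤
      h * max (dist x y) (max (dist x (T x) + dist y (T y)) (dist x (T y) + dist y (T x)))) :
    ∀ x y : X, dist (T x) (T y) ≤
      max h (h / (1 - h)) * dist x y + 2 * max h (h / (1 - h)) * dist x (T x) := by
  intro x y
  set L := max h (h / (1 - h)) with hL
  have h1h : (0:ℝ) < 1 - h := by linarith
  have hLh : h ≤ L := le_max_left _ _
  have hLq : h / (1 - h) ≤ L := le_max_right _ _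
  have hL0 : 0 ≤ L := le_trans hh0 hLh
  have hLh1 : h ≤ L * (1 - h) := by
    have := (div_le_iff₀ h1h).mp hLq
    linarith
  have key := hT x y
  have d0 : 0 ≤ dist x y := dist_nonneg
  have d1 : 0 ≤ dist x (T x) := dist_nonneg
  have D0 : 0 ≤ dist (T x) (T y) := dist_nonneg
  rcases le_total (max (dist x (T x) + dist y (T y)) (dist x (T y) + dist y (T x))) (dist x y)
      with h2 | h2
  · rw [max_eq_left h2] at key
    nlinarith
  · rw [max_eq_right h2] at key
    rcases le_total (dist x (T y) + dist y (T x)) (dist x (T x) + dist y (T y)) with h3 | h3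
    · rw [max_eq_left h3] at key
      have t1 : dist y (T y) ≤ dist y x + dist x (T x) + dist (T x) (T y) :=
        dist_triangle4 y x (T x) (T y)
      have e1 : dist y x = dist x y := dist_comm y x
      nlinarith [mul_nonneg hL0 (mul_nonneg h1h.le (add_nonneg d0 d1))]
    · rw [max_eq_right h3] at key
      have t1 : dist x (T y) ≤ dist x (T x) + dist (T x) (T y) := dist_triangle _ _ _
      have t2 : dist y (T x) ≤ dist y x + dist x (T x) := dist_triangle _ _ _
      have e1 : dist y x = dist x y := dist_comm y x
      nlinarith [mul_nonneg hL0 (mul_nonneg h1h.le (add_nonneg d0 d1))]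
end

section
/- Let (X,d) be a metric space and T : X → X a generalized C^q-mapping with constant h ∈ [0,1). Then, with λ = max{h, h/(1−h)}, for all x,y ∈ X one has d(Tx,Ty) ≤ λ·d(x,y) + 2λ·d(y,Tx). -/
/-- A generalized C^q-mapping satisfies d(Tx,Ty) ≤ λ d(x,y) + 2λ d(y,Tx). -/
theorem stmt_1 {X : Type*} [MetricSpace X] (T : X → X) (h : ℝ)
    (hh0 : 0 ≤ h) (hh1 : h < 1)
    (hT : ∀ x y : X, dist (T x) (T y) ≤
      h * max (dist x y) (max (dist x (T x) + dist y (T y)) (dist x (T y) + dist y (T x)))) :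
    ∀ x y : X, dist (T x) (T y) ≤
      max h (h / (1 - h)) * dist x y + 2 * max h (h / (1 - h)) * dist y (T x) := by
  intro x y
  have h1 : (0:ℝ) < 1 - h := by linarith
  have hb : dist x (T x) ≤ dist x y + dist y (T x) := dist_triangle x y (T x)
  have hc : dist y (T y) ≤ dist y (T x) + dist (T x) (T y) := dist_triangle y (T x) (T y)
  have he : dist x (T y) ≤ dist x y + dist y (T y) := dist_triangle x y (T y)
  have key : dist (T x) (T y) ≤
      h * (dist x y + 2 * dist y (T x) + dist (T x) (T y)) := by
    refine (hT x y).trans (mul_le_mul_of_nonneg_left ?_ hh0)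
    have hf : (0:ℝ) ≤ dist y (T x) := dist_nonneg
    have hD : (0:ℝ) ≤ dist (T x) (T y) := dist_nonneg
    apply max_le
    · linarith
    · apply max_le <;> linarith
  have hlam : h / (1 - h) ≤ max h (h / (1 - h)) := le_max_right _ _
  have hD2 : dist (T x) (T y) ≤ h / (1 - h) * (dist x y + 2 * dist y (T x)) := by
    rw [div_mul_eq_mul_div, le_div_iff₀ h1]
    nlinarith
  have ha : (0:ℝ) ≤ dist x y := dist_nonneg
  have hf : (0:ℝ) ≤ dist y (T x) := dist_nonneg
  nlinarith
end

section
/- Let (X,d) be a metric space, T : X → X a generalized C^q-mapping with constant h ∈ [0,1/2) (so that λ = max{h, h/(1−h)} < 1), and p a fixed point of T. Then the Picard iterates x_{n+1} = T x_n starting from any x_0 satisfy d(x_n, p) ≤ λⁿ · d(x_0, p) for all n ≥ 0. -/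
/-- Picard iterates of a generalized C^q-mapping satisfy d(xₙ,p) ≤ λⁿ d(x₀,p). -/
theorem stmt_4 {X : Type*} [MetricSpace X] (T : X → X) (h : ℝ)
    (hh0 : 0 ≤ h) (hh1 : h < 1/2)
    (hT : ∀ x y : X, dist (T x) (T y) ≤
      h * max (dist x y) (max (dist x (T x) + dist y (T y)) (dist x (T y) + dist y (T x))))
    (p : X) (hp : T p = p) (x : ℕ → X) (hx : ∀ n, x (n + 1) = T (x n)) :
    ∀ n : ℕ, dist (x n) p ≤ (max h (h / (1 - h)))^n * dist (x 0) p := by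
  have h1 : (0:ℝ) < 1 - h := by linarith
  set L := max h (h / (1 - h)) with hL
  have hL0 : 0 ≤ L := le_trans hh0 (le_max_left _ _)
  have key : ∀ y : X, dist (T y) p ≤ L * dist y p := by
    intro y
    have H := hT y p
    rw [hp, dist_self, add_zero] at H
    have hA : 0 ≤ dist y p := dist_nonneg
    have hmax : max (dist y p) (max (dist y (T y)) (dist y p + dist p (T y)))
        ≤ dist y p + dist p (T y) := by
      apply max_le
      · linarith [dist_nonneg (x := p) (y := T y)]
      · apply max_le
        · exact dist_triangle y p (T y)
        · exact le_refl _
    have H2 : dist (T y) p ≤ h * (dist y p + dist p (T y)) :=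
      le_trans H (mul_le_mul_of_nonneg_left hmax hh0)
    rw [dist_comm p (T y)] at H2
    have H3 : dist (T y) p ≤ h / (1 - h) * dist y p := by
      rw [div_mul_eq_mul_div, le_div_iff₀ h1]
      nlinarith
    exact le_trans H3 (mul_le_mul_of_nonneg_right (le_max_right _ _) hA)
  intro n
  induction n with
  | zero => simp
  | succ n ih =>
    rw [hx n]
    calc dist (T (x n)) p ≤ L * dist (x n) p := key (x n)
      _ ≤ L * (L ^ n * dist (x 0) p) := mul_le_mul_of_nonneg_left ih hL0
      _ = L ^ (n+1) * dist (x 0) p := by ring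
end

section
/- Let (X,d) be a metric space, T : X → X a generalized C^q-mapping with constant h ∈ [0,1/2), and p a fixed point of T. Then the Picard iterates x_{n+1} = T x_n converge to p, i.e., d(x_n, p) → 0 as n → ∞. -/
/-- Picard iterates of a generalized C^q-mapping converge to the fixed point. -/
theorem stmt_5 {X : Type*} [MetricSpace X] (T : X → X) (h : ℝ)
    (hh0 : 0 ≤ h) (hh1 : h < 1/2)
    (hT : ∀ x y : X, dist (T x) (T y) ≤
      h * max (dist x y) (max (dist x (T x) + dist y (T y)) (dist x (T y) + dist y (T x))))
    (p : X) (hp : T p = p) (x : ℕ → X) (hx : ∀ n, x (n + 1) = T (x n)) :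
    Filter.Tendsto (fun n => dist (x n) p) Filter.atTop (nhds 0) := by
  have h1 : (0:ℝ) < 1 - h := by linarith
  set r : ℝ := h / (1 - h) with hr
  have hr0 : 0 ≤ r := div_nonneg hh0 h1.le
  have hr1 : r < 1 := (div_lt_one h1).mpr (by linarith)
  have key : ∀ n, dist (x (n+1)) p ≤ r * dist (x n) p := by
    intro n
    have H := hT (x n) p
    rw [hp] at H
    set a := dist (x n) p with ha
    set b := dist (T (x n)) p with hb
    have hb0 : 0 ≤ b := dist_nonneg
    have ha0 : 0 ≤ a := dist_nonneg
    have htri : dist (x n) (T (x n)) ≤ a + b := dist_triangle _ p _ |>.trans (by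
      rw [dist_comm p (T (x n))])
    have hcomm : dist p (T (x n)) = b := dist_comm _ _
    have hmax : max (dist (x n) p) (max (dist (x n) (T (x n)) + dist p p)
        (dist (x n) p + dist p (T (x n)))) ≤ a + b := by
      simp only [dist_self, add_zero, hcomm, ← ha]
      exact max_le (by linarith) (max_le htri le_rfl)
    have hble : b ≤ h * (a + b) :=
      H.trans (mul_le_mul_of_nonneg_left hmax hh0)
    have : b * (1 - h) ≤ h * a := by nlinarith
    rw [hx n, ← hb, hr, div_mul_eq_mul_div, le_div_iff₀ h1]
    linarith
  have geom : ∀ n, dist (x n) p ≤ dist (x 0) p * r ^ n := by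
    intro n
    induction n with
    | zero => simp
    | succ k ih =>
      calc dist (x (k+1)) p ≤ r * dist (x k) p := key k
        _ ≤ r * (dist (x 0) p * r ^ k) := by
            exact mul_le_mul_of_nonneg_left ih hr0
        _ = dist (x 0) p * r ^ (k+1) := by ring
  have hg : Filter.Tendsto (fun n => dist (x 0) p * r ^ n) Filter.atTop (nhds 0) := by
    have := tendsto_pow_atTop_nhds_zero_of_lt_one hr0 hr1
    simpa using this.const_mul (dist (x 0) p)
  exact squeeze_zero (fun n => dist_nonneg) geom hg
end

section
/- Let X be a Kohlenbach hyperbolic space with convexity map W satisfying (W1): d(u, W(x,y,α)) ≤ α·d(u,x) + (1−α)·d(u,y) for all u,x,y ∈ X, α ∈ [0,1]. Let T : X → X be a generalized C^q-mapping with constant h ∈ [0,1/2), λ = max{h, h/(1−h)}, and p a fixed point of T. Then the Mann iterates x_{n+1} = W(T x_n, x_n, α_n), with α_n ∈ [0,1], satisfy d(x_{n+1}, p) ≤ ∏_{k=0}^{n} (1 − (1−λ)·α_k) · d(x_0, p). -/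
/-- Mann iterates in a Kohlenbach hyperbolic space: product error estimate. -/
theorem stmt_6 {X : Type*} [MetricSpace X] (W : X → X → ℝ → X)
    (hW : ∀ (u x y : X) (α : ℝ), 0 ≤ α → α ≤ 1 →
      dist u (W x y α) ≤ α * dist u x + (1 - α) * dist u y)
    (T : X → X) (h : ℝ) (hh0 : 0 ≤ h) (hh1 : h < 1/2)
    (hT : ∀ x y : X, dist (T x) (T y) ≤
      h * max (dist x y) (max (dist x (T x) + dist y (T y)) (dist x (T y) + dist y (T x))))
    (p : X) (hp : T p = p)
    (α : ℕ → ℝ) (hα : ∀ n, α n ∈ Set.Icc (0 : ℝ) 1)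
    (x : ℕ → X) (hx : ∀ n, x (n + 1) = W (T (x n)) (x n) (α n)) :
    ∀ n : ℕ, dist (x (n + 1)) p ≤
      (∏ k ∈ Finset.range (n + 1), (1 - (1 - max h (h / (1 - h))) * α k)) * dist (x 0) p := by
  set lam := max h (h / (1 - h)) with hlamdef
  have hh1' : h < 1 := by linarith
  have h1h : (0:ℝ) < 1 - h := by linarith
  have hlam0 : 0 ≤ lam := le_trans hh0 (le_max_left _ _)
  have hlam1 : lam < 1 := by
    apply max_lt hh1'
    rw [div_lt_one h1h]; linarith
  -- key: d(Tz, p) ≤ lam * d(z, p)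
  have key : ∀ z : X, dist (T z) p ≤ lam * dist z p := by
    intro z
    have h1 := hT z p
    rw [hp] at h1
    have hmax : max (dist z p) (max (dist z (T z) + dist p p) (dist z p + dist p (T z)))
        ≤ dist z p + dist (T z) p := by
      apply max_le
      · linarith [dist_nonneg (x := T z) (y := p)]
      apply max_le
      · rw [dist_self]
        have := dist_triangle z p (T z)
        rw [dist_comm p (T z)] at this
        linarith
      · rw [dist_comm p (T z)]
    have h2 : dist (T z) p ≤ h * (dist z p + dist (T z) p) :=
      le_trans h1 (by nlinarith [le_trans h1 (mul_le_mul_of_nonneg_left hmax hh0)])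
    have h3 : (1 - h) * dist (T z) p ≤ h * dist z p := by nlinarith
    have h4 : dist (T z) p ≤ (h / (1 - h)) * dist z p := by
      rw [div_mul_eq_mul_div, le_div_iff₀ h1h]; nlinarith
    calc dist (T z) p ≤ (h / (1 - h)) * dist z p := h4
      _ ≤ lam * dist z p := by
          apply mul_le_mul_of_nonneg_right (le_max_right _ _) dist_nonneg
  have step : ∀ n : ℕ, dist (x (n + 1)) p ≤ (1 - (1 - lam) * α n) * dist (x n) p := by
    intro n
    obtain ⟨hα0, hα1⟩ := hα n
    have := hW p (T (x n)) (x n) (α n) hα0 hα1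
    rw [← hx n] at this
    rw [dist_comm (x (n+1)) p]
    calc dist p (x (n + 1)) ≤ α n * dist p (T (x n)) + (1 - α n) * dist p (x n) := this
      _ ≤ α n * (lam * dist (x n) p) + (1 - α n) * dist (x n) p := by
          rw [dist_comm p (T (x n)), dist_comm p (x n)]
          have := key (x n)
          nlinarith
      _ = (1 - (1 - lam) * α n) * dist (x n) p := by ring
  intro n
  induction n with
  | zero =>
    simpa using step 0
  | succ n ih =>
    rw [Finset.prod_range_succ]
    calc dist (x (n + 2)) p ≤ (1 - (1 - lam) * α (n + 1)) * dist (x (n + 1)) p := step (n + 1)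
      _ ≤ (1 - (1 - lam) * α (n + 1)) *
            ((∏ k ∈ Finset.range (n + 1), (1 - (1 - lam) * α k)) * dist (x 0) p) := by
          apply mul_le_mul_of_nonneg_left ih
          obtain ⟨hα0, hα1⟩ := hα (n + 1)
          nlinarith
      _ = (∏ k ∈ Finset.range (n + 1), (1 - (1 - lam) * α k)) * (1 - (1 - lam) * α (n + 1))
            * dist (x 0) p := by ring
end

section
/- Under the hypotheses of the Mann iteration estimate, if moreover ∑_{n=0}^∞ α_n = ∞, then the Mann iterates x_{n+1} = W(T x_n, x_n, α_n) converge to the fixed point p: d(x_n, p) → 0. -/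
/-- Mann iterates converge to the fixed point when ∑ αₙ = ∞. -/
theorem stmt_7 {X : Type*} [MetricSpace X] (W : X → X → ℝ → X)
    (hW : ∀ (u x y : X) (α : ℝ), 0 ≤ α → α ≤ 1 →
      dist u (W x y α) ≤ α * dist u x + (1 - α) * dist u y)
    (T : X → X) (h : ℝ) (hh0 : 0 ≤ h) (hh1 : h < 1/2)
    (hT : ∀ x y : X, dist (T x) (T y) ≤
      h * max (dist x y) (max (dist x (T x) + dist y (T y)) (dist x (T y) + dist y (T x))))
    (p : X) (hp : T p = p)
    (α : ℕ → ℝ) (hα : ∀ n, α n ∈ Set.Icc (0 : ℝ) 1)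
    (hdiv : Filter.Tendsto (fun n => ∑ k ∈ Finset.range n, α k) Filter.atTop Filter.atTop)
    (x : ℕ → X) (hx : ∀ n, x (n + 1) = W (T (x n)) (x n) (α n)) :
    Filter.Tendsto (fun n => dist (x n) p) Filter.atTop (nhds 0) := by
  set lam := h / (1 - h) with hlamdef
  have h1h : (0:ℝ) < 1 - h := by linarith
  have hlam0 : 0 ≤ lam := div_nonneg hh0 h1h.le
  have hlam1 : lam < 1 := by rw [hlamdef, div_lt_one h1h]; linarith
  -- step contraction toward p
  have hstep : ∀ z, dist (T z) p ≤ lam * dist z p := by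
    intro z
    have h0 := hT z p
    rw [hp] at h0
    have hmax : max (dist z p) (max (dist z (T z) + dist p p) (dist z p + dist p (T z)))
        ≤ dist z p + dist p (T z) := by
      apply max_le
      · have := dist_nonneg (x := p) (y := T z); linarith
      · apply max_le
        · rw [dist_self]
          have := dist_triangle z p (T z); linarith
        · exact le_refl _
    have h1 : dist (T z) p ≤ h * (dist z p + dist p (T z)) :=
      h0.trans (mul_le_mul_of_nonneg_left hmax hh0)
    rw [dist_comm p (T z)] at h1
    rw [hlamdef, div_mul_eq_mul_div, le_div_iff₀ h1h]
    nlinarith [dist_nonneg (x := T z) (y := p)]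
  have hfac : ∀ k, 0 ≤ 1 - (1 - lam) * α k := by
    intro k
    obtain ⟨hk0, hk1⟩ := hα k
    nlinarith
  -- one-step estimate
  have hiter : ∀ n, dist (x (n+1)) p ≤ (1 - (1 - lam) * α n) * dist (x n) p := by
    intro n
    obtain ⟨hk0, hk1⟩ := hα n
    have h0 : dist p (x (n+1)) ≤ α n * dist p (T (x n)) + (1 - α n) * dist p (x n) := by
      rw [hx n]; exact hW p _ _ _ hk0 hk1
    rw [dist_comm p (x (n+1)), dist_comm p (T (x n)), dist_comm p (x n)] at h0
    have h1 := hstep (x n)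
    nlinarith [dist_nonneg (x := x n) (y := p)]
  -- iterated estimate
  have key : ∀ n, dist (x n) p ≤ dist (x 0) p * ∏ k ∈ Finset.range n, (1 - (1 - lam) * α k) := by
    intro n
    induction n with
    | zero => simp
    | succ n ih =>
      rw [Finset.prod_range_succ, ← mul_assoc]
      calc dist (x (n+1)) p ≤ (1 - (1 - lam) * α n) * dist (x n) p := hiter n
        _ ≤ (1 - (1 - lam) * α n) * (dist (x 0) p * ∏ k ∈ Finset.range n, (1 - (1 - lam) * α k)) :=
            mul_le_mul_of_nonneg_left ih (hfac n)
        _ = dist (x 0) p * (∏ k ∈ Finset.range n, (1 - (1 - lam) * α k)) * (1 - (1 - lam) * α n) := by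
            ring
  -- bound product by exponential
  have hexp : ∀ n, (∏ k ∈ Finset.range n, (1 - (1 - lam) * α k))
      ≤ Real.exp (-(1 - lam) * ∑ k ∈ Finset.range n, α k) := by
    intro n
    have : (∏ k ∈ Finset.range n, (1 - (1 - lam) * α k))
        ≤ ∏ k ∈ Finset.range n, Real.exp (-((1 - lam) * α k)) := by
      apply Finset.prod_le_prod (fun k _ => hfac k)
      intro k _
      have := Real.add_one_le_exp (-((1 - lam) * α k))
      linarith
    refine this.trans ?_
    rw [← Real.exp_sum]
    apply le_of_eq
    congr 1
    rw [Finset.mul_sum]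
    exact Finset.sum_congr rfl (fun k _ => by ring
      )
  -- the exponential bound tends to 0
  have htend : Filter.Tendsto
      (fun n => dist (x 0) p * Real.exp (-(1 - lam) * ∑ k ∈ Finset.range n, α k))
      Filter.atTop (nhds 0) := by
    have h2 : Filter.Tendsto (fun n => -(1 - lam) * ∑ k ∈ Finset.range n, α k)
        Filter.atTop Filter.atBot := by
      apply Filter.Tendsto.const_mul_atTop_of_neg (by linarith) hdiv
    have h3 := (Real.tendsto_exp_atBot).comp h2
    have := h3.const_mul (dist (x 0) p)
    simpa using this
  apply squeeze_zero (fun n => dist_nonneg) _ htend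
  intro n
  exact (key n).trans (mul_le_mul_of_nonneg_left (hexp n) dist_nonneg)
end

section
/- Let X be a Kohlenbach hyperbolic space with convexity map W satisfying (W1). Let T : X → X be a generalized C^q-mapping with constant h ∈ [0,1/2), λ = max{h, h/(1−h)}, and p a fixed point of T. Then the Ishikawa iterates, defined by y_n = W(T x_n, x_n, β_n) and x_{n+1} = W(T y_n, x_n, α_n) with α_n, β_n ∈ [0,1], satisfy d(x_{n+1}, p) ≤ (1 − α_n(1−λ)(1+β_n λ)) · d(x_n, p) for every n. -/
/-- Ishikawa iterates: one-step estimate. -/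
theorem stmt_9 {X : Type*} [MetricSpace X] (W : X → X → ℝ → X)
    (hW : ∀ (u x y : X) (α : ℝ), 0 ≤ α → α ≤ 1 →
      dist u (W x y α) ≤ α * dist u x + (1 - α) * dist u y)
    (T : X → X) (h : ℝ) (hh0 : 0 ≤ h) (hh1 : h < 1/2)
    (hT : ∀ x y : X, dist (T x) (T y) ≤
      h * max (dist x y) (max (dist x (T x) + dist y (T y)) (dist x (T y) + dist y (T x))))
    (p : X) (hp : T p = p)
    (α β : ℕ → ℝ) (hα : ∀ n, α n ∈ Set.Icc (0 : ℝ) 1) (hβ : ∀ n, β n ∈ Set.Icc (0 : ℝ) 1)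
    (x y : ℕ → X) (hy : ∀ n, y n = W (T (x n)) (x n) (β n))
    (hx : ∀ n, x (n + 1) = W (T (y n)) (x n) (α n)) :
    ∀ n : ℕ, dist (x (n + 1)) p ≤
      (1 - α n * (1 - max h (h / (1 - h))) * (1 + β n * max h (h / (1 - h)))) * dist (x n) p := by
  intro n
  set lam := max h (h / (1 - h)) with hlam
  have h1h : (0:ℝ) < 1 - h := by linarith
  have hlam0 : 0 ≤ lam := le_trans hh0 (le_max_left _ _)
  have hlam1 : lam ≤ 1 := by
    apply max_le (by linarith)
    rw [div_le_one h1h]; linarith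
  -- key: d(Tz, p) ≤ lam * d(z, p)
  have key : ∀ z : X, dist (T z) p ≤ lam * dist z p := by
    intro z
    have h2 := hT z p
    rw [hp] at h2
    have hmax : max (dist z p) (max (dist z (T z) + dist p p) (dist z p + dist p (T z)))
        ≤ dist z p + dist p (T z) := by
      apply max_le
      · nlinarith [dist_nonneg (x := p) (y := T z)]
      apply max_le
      · have := dist_triangle z p (T z)
        simp only [dist_self]
        linarith
      · exact le_refl _
    have h3 : dist (T z) p ≤ h * (dist z p + dist p (T z)) :=
      le_trans h2 (by nlinarith)
    rw [dist_comm p (T z)] at h3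
    have h4 : dist (T z) p ≤ (h / (1 - h)) * dist z p := by
      rw [div_mul_eq_mul_div, le_div_iff₀ h1h]
      nlinarith
    exact le_trans h4 (by
      have := dist_nonneg (x := z) (y := p)
      exact mul_le_mul_of_nonneg_right (le_max_right _ _) this)
  obtain ⟨hα0, hα1⟩ := hα n
  obtain ⟨hβ0, hβ1⟩ := hβ n
  -- estimate for y n
  have hyp : dist p (y n) ≤ (1 - β n * (1 - lam)) * dist (x n) p := by
    rw [hy n]
    have h5 := hW p (T (x n)) (x n) (β n) hβ0 hβ1
    have h6 : dist p (T (x n)) ≤ lam * dist (x n) p := by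
      rw [dist_comm]; exact key (x n)
    rw [dist_comm p (x n)] at h5
    nlinarith [dist_nonneg (x := x n) (y := p)]
  have hyp0 : 0 ≤ (1 - β n * (1 - lam)) * dist (x n) p := by
    have : β n * (1 - lam) ≤ 1 := by nlinarith
    have := dist_nonneg (x := x n) (y := p)
    nlinarith
  -- estimate for x (n+1)
  rw [hx n, dist_comm]
  have h7 := hW p (T (y n)) (x n) (α n) hα0 hα1
  have h8 : dist p (T (y n)) ≤ lam * ((1 - β n * (1 - lam)) * dist (x n) p) := by
    calc dist p (T (y n)) = dist (T (y n)) p := dist_comm _ _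
      _ ≤ lam * dist (y n) p := key (y n)
      _ ≤ lam * ((1 - β n * (1 - lam)) * dist (x n) p) := by
          apply mul_le_mul_of_nonneg_left _ hlam0
          rw [dist_comm]; exact hyp
  rw [dist_comm p (x n)] at h7
  have hd := dist_nonneg (x := x n) (y := p)
  nlinarith
end

section
/- Under the hypotheses of the Ishikawa estimate, d(x_{n+1}, p) ≤ (1 − α_n(1−λ)²) · d(x_n, p), and hence d(x_{n+1}, p) ≤ ∏_{k=0}^{n}(1 − α_k(1−λ)²) · d(x_0, p). If moreover ∑ α_n = ∞, then d(x_n, p) → 0. -/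
/-- Ishikawa iterates: simplified estimate, product bound, and convergence. -/
theorem stmt_10 {X : Type*} [MetricSpace X] (W : X → X → ℝ → X)
    (hW : ∀ (u x y : X) (α : ℝ), 0 ≤ α → α ≤ 1 →
      dist u (W x y α) ≤ α * dist u x + (1 - α) * dist u y)
    (T : X → X) (h : ℝ) (hh0 : 0 ≤ h) (hh1 : h < 1/2)
    (hT : ∀ x y : X, dist (T x) (T y) ≤
      h * max (dist x y) (max (dist x (T x) + dist y (T y)) (dist x (T y) + dist y (T x))))
    (p : X) (hp : T p = p)
    (α β : ℕ → ℝ) (hα : ∀ n, α n ∈ Set.Icc (0 : ℝ) 1) (hβ : ∀ n, β n ∈ Set.Icc (0 : ℝ) 1)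
    (x y : ℕ → X) (hy : ∀ n, y n = W (T (x n)) (x n) (β n))
    (hx : ∀ n, x (n + 1) = W (T (y n)) (x n) (α n)) :
    (∀ n : ℕ, dist (x (n + 1)) p ≤
      (1 - α n * (1 - max h (h / (1 - h)))^2) * dist (x n) p) ∧
    (∀ n : ℕ, dist (x (n + 1)) p ≤
      (∏ k ∈ Finset.range (n + 1), (1 - α k * (1 - max h (h / (1 - h)))^2)) * dist (x 0) p) ∧
    (Filter.Tendsto (fun n => ∑ k ∈ Finset.range n, α k) Filter.atTop Filter.atTop →
      Filter.Tendsto (fun n => dist (x n) p) Filter.atTop (nhds 0)) := by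
  set lam := max h (h / (1 - h)) with hlam
  have h1h : (0:ℝ) < 1 - h := by linarith
  have hlam0 : 0 ≤ lam := le_trans hh0 (le_max_left _ _)
  have hlam1 : lam < 1 := by
    apply max_lt (by linarith)
    rw [div_lt_one h1h]; linarith
  have hlamh : h ≤ lam * (1 - h) := by
    have := le_max_right h (h / (1 - h))
    calc h = (h / (1 - h)) * (1 - h) := by field_simp
    _ ≤ lam * (1 - h) := by nlinarith
  -- key contraction at p
  have key : ∀ z : X, dist (T z) p ≤ lam * dist z p := by
    intro z
    have h1 := hT z p
    rw [hp, dist_self] at h1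
    have h2 : dist z (T z) ≤ dist z p + dist p (T z) := dist_triangle _ _ _
    have h3 : max (dist z p) (max (dist z (T z) + 0) (dist z p + dist p (T z)))
        ≤ dist z p + dist p (T z) := by
      apply max_le (by nlinarith [dist_nonneg (x := p) (y := T z)])
      apply max_le (by linarith) le_rfl
    have h4 : dist (T z) p ≤ h * (dist z p + dist p (T z)) := by
      calc dist (T z) p ≤ h * _ := h1
      _ ≤ h * (dist z p + dist p (T z)) := by nlinarith
    rw [dist_comm p (T z)] at h4
    nlinarith [dist_nonneg (x := T z) (y := p), dist_nonneg (x := z) (y := p)]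
  have main : ∀ n : ℕ, dist (x (n + 1)) p ≤
      (1 - α n * (1 - lam)^2) * dist (x n) p := by
    intro n
    obtain ⟨ha0, ha1⟩ := hα n
    obtain ⟨hb0, hb1⟩ := hβ n
    have hyp : dist p (y n) ≤ (1 - β n * (1 - lam)) * dist (x n) p := by
      rw [hy n]
      have := hW p (T (x n)) (x n) (β n) hb0 hb1
      have hk := key (x n)
      rw [dist_comm p (T (x n)), dist_comm p (x n)] at this
      nlinarith
    have hxp : dist p (x (n + 1)) ≤ α n * dist p (T (y n)) + (1 - α n) * dist p (x n) := by
      rw [hx n]; exact hW p (T (y n)) (x n) (α n) ha0 ha1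
    have hk := key (y n)
    rw [dist_comm p (T (y n))] at hxp
    rw [dist_comm (y n) p] at hk
    rw [dist_comm (x (n+1)) p]
    have hyp0 : (0:ℝ) ≤ dist p (y n) := dist_nonneg
    have hxp0 : (0:ℝ) ≤ dist (x n) p := dist_nonneg
    rw [dist_comm p (x n)] at hxp
    have s1 : α n * dist (T (y n)) p ≤ α n * (lam * dist p (y n)) :=
      mul_le_mul_of_nonneg_left hk ha0
    have s2 : α n * lam * dist p (y n) ≤ α n * lam * ((1 - β n * (1 - lam)) * dist (x n) p) :=
      mul_le_mul_of_nonneg_left hyp (mul_nonneg ha0 hlam0)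
    nlinarith [mul_nonneg (mul_nonneg (mul_nonneg ha0 hlam0)
        (by linarith : (0:ℝ) ≤ 1 - lam)) hxp0,
      mul_nonneg (mul_nonneg (mul_nonneg (mul_nonneg ha0 hb0) hlam0)
        (by linarith : (0:ℝ) ≤ 1 - lam)) hxp0]
  have hfac : ∀ k : ℕ, 0 ≤ 1 - α k * (1 - lam)^2 := by
    intro k
    obtain ⟨ha0, ha1⟩ := hα k
    nlinarith [sq_nonneg (1 - lam)]
  have prodb : ∀ n : ℕ, dist (x (n + 1)) p ≤
      (∏ k ∈ Finset.range (n + 1), (1 - α k * (1 - lam)^2)) * dist (x 0) p := by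
    intro n
    induction n with
    | zero => simpa using main 0
    | succ n ih =>
      calc dist (x (n + 2)) p ≤ (1 - α (n+1) * (1 - lam)^2) * dist (x (n+1)) p := main (n+1)
      _ ≤ (1 - α (n+1) * (1 - lam)^2) *
          ((∏ k ∈ Finset.range (n + 1), (1 - α k * (1 - lam)^2)) * dist (x 0) p) := by
          apply mul_le_mul_of_nonneg_left ih (hfac _)
      _ = (∏ k ∈ Finset.range (n + 2), (1 - α k * (1 - lam)^2)) * dist (x 0) p := by
          rw [Finset.prod_range_succ _ (n+1)]; ring
  refine ⟨main, prodb, ?_⟩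
  intro hS
  set c := (1 - lam)^2 with hc
  have hc0 : 0 < c := by
    have : 0 < 1 - lam := by linarith
    positivity
  have prodexp : ∀ n : ℕ, (∏ k ∈ Finset.range n, (1 - α k * c)) ≤
      Real.exp (-(c * ∑ k ∈ Finset.range n, α k)) := by
    intro n
    calc (∏ k ∈ Finset.range n, (1 - α k * c))
        ≤ ∏ k ∈ Finset.range n, Real.exp (-(α k * c)) := by
          apply Finset.prod_le_prod
          · intro k _; exact hfac k
          · intro k _
            have := Real.add_one_le_exp (-(α k * c))
            linarith
      _ = Real.exp (∑ k ∈ Finset.range n, -(α k * c)) := by rw [Real.exp_sum]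
      _ = Real.exp (-(c * ∑ k ∈ Finset.range n, α k)) := by
          congr 1
          rw [Finset.mul_sum, ← Finset.sum_neg_distrib]
          exact Finset.sum_congr rfl (fun k _ => by ring)
  have htend : Filter.Tendsto (fun n => Real.exp (-(c * ∑ k ∈ Finset.range n, α k)) * dist (x 0) p)
      Filter.atTop (nhds 0) := by
    have h1 : Filter.Tendsto (fun n => -(c * ∑ k ∈ Finset.range n, α k)) Filter.atTop Filter.atBot := by
      exact Filter.tendsto_neg_atBot_iff.mpr (hS.const_mul_atTop hc0)
    have h2 := (Real.tendsto_exp_atBot.comp h1).mul_const (dist (x 0) p)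
    simpa using h2
  apply squeeze_zero' (Filter.Eventually.of_forall (fun n => dist_nonneg)) ?_ htend
  filter_upwards [Filter.eventually_ge_atTop 1] with n hn
  obtain ⟨m, rfl⟩ := Nat.exists_eq_add_of_le hn
  calc dist (x (1 + m)) p ≤ (∏ k ∈ Finset.range (m + 1), (1 - α k * c)) * dist (x 0) p := by
        rw [add_comm 1 m] at *; exact prodb m
    _ ≤ Real.exp (-(c * ∑ k ∈ Finset.range (m+1), α k)) * dist (x 0) p := by
        apply mul_le_mul_of_nonneg_right (prodexp (m+1)) dist_nonneg
    _ = Real.exp (-(c * ∑ k ∈ Finset.range (1+m), α k)) * dist (x 0) p := by rw [add_comm 1 m]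
end

section
/- Let X be a Kohlenbach hyperbolic space with convexity map W satisfying (W1). Let T be a generalized C^q-mapping with constant h ∈ [0,1/2), λ = max{h, h/(1−h)}, and p a fixed point of T. Then the Xu-Noor iterates, given by z_n = W(T x_n, x_n, γ_n), y_n = W(T z_n, x_n, β_n), x_{n+1} = W(T y_n, x_n, α_n) with α_n, β_n, γ_n ∈ [0,1], satisfy d(x_{n+1}, p) ≤ (1 − α_n(1−λ)) · d(x_n, p), and hence, if ∑ α_n = ∞, then d(x_n, p) → 0. -/
/-!
A generalized C^q-mapping with constant `h < 1` contracts distances to a fixed point `p` by the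
factor `h / (1 - h)`: taking `y := p` in its defining inequality gives
`d(Tu, p) ≤ h (d(u, p) + d(Tu, p))`.
Feeding this through the three convex combinations of a Xu-Noor step, the inner two do not move
away from `p`, and the outer one shrinks `d(x_n, p)` by `1 - α_n (1 - λ)`. Since `1 - t ≤ exp (-t)`,
iterating gives `d(x_n, p) ≤ d(x_0, p) exp (-(1 - λ) ∑_{k < n} α_k)`, which tends to `0`.
-/

open Filter Finset Set Topology

theorem le_mul_exp_neg_sum_of_le_one_sub_mul {a α : ℕ → ℝ} {c : ℝ} (ha : ∀ n, 0 ≤ a n)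
    (hstep : ∀ n, a (n + 1) ≤ (1 - α n * c) * a n) (n : ℕ) :
    a n ≤ a 0 * Real.exp (-(c * ∑ k ∈ range n, α k)) := by
  induction n with
  | zero => simp
  | succ n ih =>
    have hexp : 1 - α n * c ≤ Real.exp (-(c * α n)) := by
      linarith [Real.add_one_le_exp (-(c * α n))]
    calc a (n + 1) ≤ (1 - α n * c) * a n := hstep n
      _ ≤ Real.exp (-(c * α n)) * (a 0 * Real.exp (-(c * ∑ k ∈ range n, α k))) :=
        mul_le_mul hexp ih (ha n) (Real.exp_nonneg _)
      _ = a 0 * Real.exp (-(c * ∑ k ∈ range (n + 1), α k)) := by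
        rw [sum_range_succ, mul_add, neg_add, Real.exp_add]; ring

theorem tendsto_zero_of_le_one_sub_mul {a α : ℕ → ℝ} {c : ℝ} (ha : ∀ n, 0 ≤ a n) (hc : 0 < c)
    (hstep : ∀ n, a (n + 1) ≤ (1 - α n * c) * a n)
    (hsum : Tendsto (fun n => ∑ k ∈ range n, α k) atTop atTop) :
    Tendsto a atTop (𝓝 0) := by
  have hexp : Tendsto (fun n => Real.exp (-(c * ∑ k ∈ range n, α k))) atTop (𝓝 0) :=
    Real.tendsto_exp_atBot.comp (tendsto_neg_atTop_atBot.comp (hsum.const_mul_atTop hc))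
  exact squeeze_zero ha (le_mul_exp_neg_sum_of_le_one_sub_mul ha hstep)
    (by simpa using hexp.const_mul (a 0))

section Hyperbolic

variable {X : Type*} [MetricSpace X] {W : X → X → ℝ → X}

theorem dist_fixedPoint_le_of_generalized_contraction {T : X → X} {h : ℝ} (hh0 : 0 ≤ h)
    (hh1 : h < 1)
    (hT : ∀ x y : X, dist (T x) (T y) ≤
      h * max (dist x y) (max (dist x (T x) + dist y (T y)) (dist x (T y) + dist y (T x))))
    {p : X} (hp : T p = p) (u : X) :
    dist (T u) p ≤ h / (1 - h) * dist u p := by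
  have hmax : max (dist u p) (max (dist u (T u) + dist p p) (dist u p + dist p (T u)))
      ≤ dist u p + dist (T u) p := by
    have := dist_triangle_right u (T u) p
    rw [dist_self, add_zero, dist_comm p (T u)]
    exact max_le (le_add_of_nonneg_right dist_nonneg) (max_le this le_rfl)
  have hrec : dist (T u) p ≤ h * (dist u p + dist (T u) p) := by
    have := hT u p
    rw [hp] at this
    exact this.trans (mul_le_mul_of_nonneg_left hmax hh0)
  rw [div_mul_eq_mul_div, le_div_iff₀ (by linarith)]
  linarith

variable (hW : ∀ (u x y : X) (α : ℝ), 0 ≤ α → α ≤ 1 →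
  dist u (W x y α) ≤ α * dist u x + (1 - α) * dist u y)
include hW

theorem dist_W_le_of_le {a b p : X} {t r s : ℝ} (ht : t ∈ Icc (0 : ℝ) 1) (ha : dist a p ≤ r)
    (hb : dist b p ≤ s) :
    dist (W a b t) p ≤ t * r + (1 - t) * s := by
  have h1t : 0 ≤ 1 - t := by linarith [ht.2]
  calc dist (W a b t) p = dist p (W a b t) := dist_comm _ _
    _ ≤ t * dist p a + (1 - t) * dist p b := hW _ _ _ _ ht.1 ht.2
    _ ≤ t * r + (1 - t) * s := by
      rw [dist_comm p a, dist_comm p b]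
      exact add_le_add (mul_le_mul_of_nonneg_left ha ht.1) (mul_le_mul_of_nonneg_left hb h1t)

theorem dist_xuNoor_step_le {T : X → X} {p : X} {L : ℝ} (hL0 : 0 ≤ L) (hL1 : L ≤ 1)
    (hTp : ∀ u, dist (T u) p ≤ L * dist u p) (u : X) {a b c : ℝ} (ha : a ∈ Icc (0 : ℝ) 1)
    (hb : b ∈ Icc (0 : ℝ) 1) (hc : c ∈ Icc (0 : ℝ) 1) :
    dist (W (T (W (T (W (T u) u c)) u b)) u a) p ≤ (1 - a * (1 - L)) * dist u p := by
  have hT_le (v : X) : dist (T v) p ≤ dist v p :=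
    (hTp v).trans (mul_le_of_le_one_left dist_nonneg hL1)
  have hz : dist (W (T u) u c) p ≤ dist u p := by
    linarith [dist_W_le_of_le hW hc (hT_le u) (le_refl (dist u p))]
  have hy : dist (W (T (W (T u) u c)) u b) p ≤ dist u p := by
    linarith [dist_W_le_of_le hW hb ((hT_le _).trans hz) (le_refl (dist u p))]
  linarith [dist_W_le_of_le hW ha ((hTp _).trans (mul_le_mul_of_nonneg_left hy hL0))
    (le_refl (dist u p))]

end Hyperbolic

/-- Xu-Noor iterates: step estimate and convergence. -/
theorem stmt_11 {X : Type*} [MetricSpace X] (W : X → X → ℝ → X)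
    (hW : ∀ (u x y : X) (α : ℝ), 0 ≤ α → α ≤ 1 →
      dist u (W x y α) ≤ α * dist u x + (1 - α) * dist u y)
    (T : X → X) (h : ℝ) (hh0 : 0 ≤ h) (hh1 : h < 1/2)
    (hT : ∀ x y : X, dist (T x) (T y) ≤
      h * max (dist x y) (max (dist x (T x) + dist y (T y)) (dist x (T y) + dist y (T x))))
    (p : X) (hp : T p = p)
    (α β γ : ℕ → ℝ) (hα : ∀ n, α n ∈ Set.Icc (0 : ℝ) 1)
    (hβ : ∀ n, β n ∈ Set.Icc (0 : ℝ) 1) (hγ : ∀ n, γ n ∈ Set.Icc (0 : ℝ) 1)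
    (x y z : ℕ → X) (hz : ∀ n, z n = W (T (x n)) (x n) (γ n))
    (hy : ∀ n, y n = W (T (z n)) (x n) (β n))
    (hx : ∀ n, x (n + 1) = W (T (y n)) (x n) (α n)) :
    (∀ n : ℕ, dist (x (n + 1)) p ≤
      (1 - α n * (1 - max h (h / (1 - h)))) * dist (x n) p) ∧
    (Filter.Tendsto (fun n => ∑ k ∈ Finset.range n, α k) Filter.atTop Filter.atTop →
      Filter.Tendsto (fun n => dist (x n) p) Filter.atTop (nhds 0)) := by
  set L := max h (h / (1 - h))
  have hL0 : 0 ≤ L := hh0.trans (le_max_left _ _)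
  have hL1 : L < 1 := max_lt (by linarith) ((div_lt_one (by linarith)).2 (by linarith))
  have hTp (u : X) : dist (T u) p ≤ L * dist u p :=
    (dist_fixedPoint_le_of_generalized_contraction hh0 (by linarith) hT hp u).trans
      (mul_le_mul_of_nonneg_right (le_max_right _ _) dist_nonneg)
  have hstep (n : ℕ) : dist (x (n + 1)) p ≤ (1 - α n * (1 - L)) * dist (x n) p := by
    rw [hx, hy, hz]
    exact dist_xuNoor_step_le hW hL0 hL1.le hTp (x n) (hα n) (hβ n) (hγ n)
  exact ⟨hstep, tendsto_zero_of_le_one_sub_mul (fun _ => dist_nonneg) (by linarith) hstep⟩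
end

section
/- Let λ ∈ [0,1) and (α_n) be a sequence in [ε, 1−ε] for some ε ∈ (0, 1/2). Then λⁿ / ∏_{k=0}^{n−1}(1 − (1−λ)α_k) → 0 as n → ∞ whenever λ < 1 − (1−λ)(1−ε), i.e., the Picard error bound λⁿ tends to 0 faster than the Mann error bound ∏_{k=0}^{n−1}(1 − (1−λ)α_k) in the sense of Berinde. -/
/-- The Picard error bound λⁿ tends to 0 faster than the Mann product bound. -/
theorem stmt_12 (lam : ℝ) (hlam0 : 0 ≤ lam) (hlam1 : lam < 1)
    (ε : ℝ) (hε : ε ∈ Set.Ioo (0 : ℝ) (1/2))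
    (α : ℕ → ℝ) (hα : ∀ n, α n ∈ Set.Icc ε (1 - ε))
    (hfast : lam < 1 - (1 - lam) * (1 - ε)) :
    Filter.Tendsto
      (fun n => lam^n / ∏ k ∈ Finset.range n, (1 - (1 - lam) * α k))
      Filter.atTop (nhds 0) := by
  set c : ℝ := 1 - (1 - lam) * (1 - ε) with hc
  have hc0 : 0 < c := lt_of_le_of_lt hlam0 hfast
  have hfac : ∀ k, c ≤ 1 - (1 - lam) * α k := by
    intro k
    have h1 : (1 - lam) * α k ≤ (1 - lam) * (1 - ε) :=
      mul_le_mul_of_nonneg_left (hα k).2 (by linarith)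
    simp only [hc]; linarith
  have hprod : ∀ n, c ^ n ≤ ∏ k ∈ Finset.range n, (1 - (1 - lam) * α k) := by
    intro n
    calc c ^ n = ∏ _k ∈ Finset.range n, c := by simp
    _ ≤ _ := Finset.prod_le_prod (fun k _ => le_of_lt hc0) (fun k _ => hfac k)
  have hprodpos : ∀ n, 0 < ∏ k ∈ Finset.range n, (1 - (1 - lam) * α k) :=
    fun n => lt_of_lt_of_le (pow_pos hc0 n) (hprod n)
  have hbound : ∀ n, lam^n / ∏ k ∈ Finset.range n, (1 - (1 - lam) * α k) ≤ (lam / c) ^ n := by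
    intro n
    rw [div_pow]
    exact div_le_div_of_nonneg_left (pow_nonneg hlam0 n) (pow_pos hc0 n) (hprod n)
  have hratio : lam / c < 1 := (div_lt_one hc0).mpr hfast
  have hratio0 : 0 ≤ lam / c := div_nonneg hlam0 hc0.le
  have htend : Filter.Tendsto (fun n => (lam / c) ^ n) Filter.atTop (nhds 0) :=
    tendsto_pow_atTop_nhds_zero_of_lt_one hratio0 hratio
  refine squeeze_zero (fun n => div_nonneg (pow_nonneg hlam0 n) (hprodpos n).le) hbound htend
end

section
/- Let λ ∈ (0,1) and (α_n) be a sequence in [ε, 1] for some ε ∈ (0,1]. Then the ratio ∏_{k=0}^{n−1}(1 − α_k(1−λ)) / ∏_{k=0}^{n−1}(1 − α_k(1−λ)²) tends to 0 as n → ∞; i.e., the Ishikawa error bound dominates the Mann error bound, so the Mann bound converges faster in the sense of Berinde. -/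
/-- The Mann product bound converges faster than the Ishikawa product bound. -/
theorem stmt_13 (lam : ℝ) (hlam : lam ∈ Set.Ioo (0 : ℝ) 1)
    (ε : ℝ) (hε : ε ∈ Set.Ioc (0 : ℝ) 1)
    (α : ℕ → ℝ) (hα : ∀ n, α n ∈ Set.Icc ε 1) :
    Filter.Tendsto
      (fun n => (∏ k ∈ Finset.range n, (1 - α k * (1 - lam))) /
        ∏ k ∈ Finset.range n, (1 - α k * (1 - lam)^2))
      Filter.atTop (nhds 0) := by
  obtain ⟨hl0, hl1⟩ := hlam
  obtain ⟨he0, he1⟩ := hε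
  set t : ℝ := 1 - lam with ht
  have ht0 : 0 < t := by simp [ht]; linarith
  have ht1 : t < 1 := by simp [ht]; linarith
  set q : ℝ := (1 - ε * t) / (1 - ε * t ^ 2) with hq
  have hden : 0 < 1 - ε * t ^ 2 := by nlinarith
  have hnum : 0 ≤ 1 - ε * t := by nlinarith
  have hq0 : 0 ≤ q := div_nonneg hnum hden.le
  have hq1 : q < 1 := by
    rw [hq, div_lt_one hden]; nlinarith [mul_pos (mul_pos he0 ht0) (sub_pos.2 ht1)]
  have key : ∀ k, 0 ≤ (1 - α k * t) / (1 - α k * t ^ 2) ∧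
      (1 - α k * t) / (1 - α k * t ^ 2) ≤ q := by
    intro k
    obtain ⟨ha1, ha2⟩ := hα k
    have hd : 0 < 1 - α k * t ^ 2 := by nlinarith
    have hn : 0 ≤ 1 - α k * t := by nlinarith
    refine ⟨div_nonneg hn hd.le, ?_⟩
    rw [hq, div_le_div_iff₀ hd hden]
    nlinarith [mul_nonneg (sub_nonneg.2 ha1) (mul_pos ht0 (sub_pos.2 ht1)).le]
  have heq : ∀ n, (∏ k ∈ Finset.range n, (1 - α k * t)) /
      ∏ k ∈ Finset.range n, (1 - α k * t ^ 2)
      = ∏ k ∈ Finset.range n, (1 - α k * t) / (1 - α k * t ^ 2) := by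
    intro n; rw [Finset.prod_div_distrib]
  have hub : ∀ n, ∏ k ∈ Finset.range n, (1 - α k * t) / (1 - α k * t ^ 2) ≤ q ^ n := by
    intro n
    calc ∏ k ∈ Finset.range n, (1 - α k * t) / (1 - α k * t ^ 2)
        ≤ ∏ _k ∈ Finset.range n, q :=
          Finset.prod_le_prod (fun k _ => (key k).1) (fun k _ => (key k).2)
      _ = q ^ n := by simp
  have hlb : ∀ n, 0 ≤ ∏ k ∈ Finset.range n, (1 - α k * t) / (1 - α k * t ^ 2) :=
    fun n => Finset.prod_nonneg fun k _ => (key k).1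
  have hq_tendsto : Filter.Tendsto (fun n => q ^ n) Filter.atTop (nhds 0) :=
    tendsto_pow_atTop_nhds_zero_of_lt_one hq0 hq1
  have := squeeze_zero hlb hub hq_tendsto
  simpa only [heq] using this
end
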